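/- arXiv:2602.06545 — 2 statements merged into one kernel-verified Lean document; each statement's English description precedes it below -/
import Mathlib

section
/- Monotonicity of the Stein solution: for every convex 1-Lipschitz function h : ℝ → ℝ, every μ ∈ ℝ and every σ > 0, the Stein solution f_{μ,σ,h} is nonincreasing on ℝ, i.e., f_{μ,σ,h}(x) ≥ f_{μ,σ,h}(y) whenever x ≤ y. -/
/-!
Write `φ`, `Φ` for the `N(μ, σ²)` density and distribution function, `c = E h(μ + σZ) = ∫ h φ`
and `F(x) = ∫_{-∞}^x (h - c) φ`, so that `f = F / (σ² φ)` and, by Stein's equation,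
`σ⁴ φ(x) f'(x) = (x - μ) F(x) + σ² φ(x) (h(x) - c)`. Fix `x` and a supporting line
`a + m (z - μ)` of the convex function `h - c` at `x`; integrating against `φ` gives
`a ≤ ∫ (h - c) φ = 0`. For the affine function itself the right-hand side equals
`a (σ² φ(x) + (x - μ) Φ(x)) ≤ 0`: the `m`-terms cancel because `∫_{-∞}^x (z - μ) φ = -σ² φ(x)`,
and the bracket is `∫_{-∞}^x (x - z) φ ≥ 0`. Replacing the line by `h - c` can only lower
`(x - μ) F(x)`: for `x ≤ μ` compare the integrals over `(-∞, x]`; for `x ≥ μ` write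
`F(x) = -∫_x^∞ (h - c) φ` and compare over `(x, ∞)`, where the bracket becomes
`∫_x^∞ (z - x) φ ≥ 0`.
-/

open MeasureTheory ProbabilityTheory Real Finset

noncomputable def gaussExp (f : ℝ → ℝ) : ℝ := ∫ z, f z ∂(gaussianReal 0 1)

noncomputable def normalPdf (μ σ x : ℝ) : ℝ :=
  (Real.sqrt (2 * Real.pi * σ ^ 2))⁻¹ * Real.exp (-(x - μ) ^ 2 / (2 * σ ^ 2))

/-- The unique bounded solution `f_{μ,σ,h}` of the Stein equation
`σ² f′(x) − (x−μ) f(x) = h(x) − E_Z[h(μ+σZ)]`. -/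
noncomputable def steinSol (μ σ : ℝ) (h : ℝ → ℝ) (x : ℝ) : ℝ :=
  (σ ^ 2 * normalPdf μ σ x)⁻¹ *
    ∫ z in Set.Iic x, (h z - gaussExp (fun w => h (μ + σ * w))) * normalPdf μ σ z

open Set Filter Topology

lemma hasDerivAt_setIntegral_Iic {E : Type*} [NormedAddCommGroup E] [NormedSpace ℝ E]
    [CompleteSpace E] {k : ℝ → E} (hk : Continuous k) (hint : Integrable k) (x : ℝ) :
    HasDerivAt (fun t => ∫ z in Iic t, k z) (k x) x := by
  have hsplit : (fun t => ∫ z in Iic t, k z)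
      = fun t => (∫ z in Iic 0, k z) + ∫ z in (0 : ℝ)..t, k z := by
    funext t
    rw [← intervalIntegral.integral_Iic_sub_Iic hint.integrableOn hint.integrableOn,
      add_sub_cancel]
  rw [hsplit]
  exact (hk.integral_hasStrictDerivAt 0 x).hasDerivAt.const_add _

lemma ConvexOn.exists_supporting_line {S : Set ℝ} {f : ℝ → ℝ} (hf : ConvexOn ℝ S f) {x : ℝ}
    (hx : x ∈ interior S) : ∃ m : ℝ, ∀ z ∈ S, f x + m * (z - x) ≤ f z := by
  refine ⟨derivWithin f (Ioi x) x, fun z hz => ?_⟩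
  rcases lt_trichotomy z x with hzx | rfl | hxz
  · have hslope := (hf.slope_le_leftDeriv_of_mem_interior hz hx hzx).trans
      (hf.leftDeriv_le_rightDeriv_of_mem_interior hx)
    rw [slope_def_field, div_le_iff₀ (sub_pos.2 hzx)] at hslope
    linarith
  · simp
  · have hslope := hf.rightDeriv_le_slope_of_mem_interior hx hz hxz
    rw [slope_def_field, le_div_iff₀ (sub_pos.2 hxz)] at hslope
    linarith

section NormalDensity

variable {μ σ : ℝ}

lemma normalPdf_eq_gaussianPDFReal (μ σ : ℝ) :
    normalPdf μ σ = gaussianPDFReal μ (.mk (σ ^ 2) (sq_nonneg σ)) := rfl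

lemma normalPdf_pos (hσ : 0 < σ) (x : ℝ) : 0 < normalPdf μ σ x := by
  unfold normalPdf; positivity

lemma normalPdf_nonneg (x : ℝ) : 0 ≤ normalPdf μ σ x := by
  unfold normalPdf; positivity

lemma continuous_normalPdf : Continuous (normalPdf μ σ) := by
  unfold normalPdf; fun_prop

lemma integrable_normalPdf : Integrable (normalPdf μ σ) := by
  rw [normalPdf_eq_gaussianPDFReal]
  exact integrable_gaussianPDFReal _ _

lemma integral_normalPdf (hσ : 0 < σ) : ∫ z, normalPdf μ σ z = 1 := by
  rw [normalPdf_eq_gaussianPDFReal]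
  exact integral_gaussianPDFReal_eq_one μ fun h => (pow_pos hσ 2).ne' congr(NNReal.toReal $h)

lemma hasDerivAt_normalPdf (x : ℝ) :
    HasDerivAt (normalPdf μ σ) (-(x - μ) / σ ^ 2 * normalPdf μ σ x) x := by
  have hexp := ((((hasDerivAt_id x).sub_const μ).pow 2).neg.div_const (2 * σ ^ 2)).exp
  refine (hexp.const_mul (√(2 * π * σ ^ 2))⁻¹).congr_deriv ?_
  simp only [normalPdf, id, Pi.pow_apply, Pi.neg_apply]
  ring

lemma tendsto_normalPdf_cocompact (hσ : 0 < σ) :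
    Tendsto (normalPdf μ σ) (cocompact ℝ) (𝓝 0) := by
  have hsq : Tendsto (fun x => dist x μ ^ 2 / (2 * σ ^ 2)) (cocompact ℝ) atTop :=
    ((tendsto_pow_atTop two_ne_zero).comp (tendsto_dist_right_cocompact_atTop μ)).atTop_div_const
      (by positivity)
  have hexp := (tendsto_exp_neg_atTop_nhds_zero.comp hsq).const_mul (√(2 * π * σ ^ 2))⁻¹
  rw [mul_zero] at hexp
  refine hexp.congr fun x => ?_
  simp [normalPdf, Real.dist_eq, neg_div]

lemma integrable_sub_mul_normalPdf (hσ : 0 < σ) :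
    Integrable (fun z => (z - μ) * normalPdf μ σ z) := by
  have hb : (0 : ℝ) < (2 * σ ^ 2)⁻¹ := by positivity
  refine (((integrable_mul_exp_neg_mul_sq hb).const_mul
    (√(2 * π * σ ^ 2))⁻¹).comp_sub_right μ).congr (.of_forall fun z => ?_)
  simp only [normalPdf]
  ring_nf

lemma hasDerivAt_neg_sq_mul_normalPdf (hσ : 0 < σ) (x : ℝ) :
    HasDerivAt (fun t => -(σ ^ 2 * normalPdf μ σ t)) ((x - μ) * normalPdf μ σ x) x := by
  refine ((hasDerivAt_normalPdf x).const_mul (σ ^ 2)).neg.congr_deriv ?_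
  field_simp

lemma setIntegral_Iic_sub_mul_normalPdf (hσ : 0 < σ) (x : ℝ) :
    ∫ z in Iic x, (z - μ) * normalPdf μ σ z = -(σ ^ 2 * normalPdf μ σ x) := by
  have hlim : Tendsto (fun t => -(σ ^ 2 * normalPdf μ σ t)) atBot (𝓝 0) := by
    simpa using (((tendsto_normalPdf_cocompact hσ).mono_left atBot_le_cocompact).const_mul
      (σ ^ 2)).neg
  simpa using integral_Iic_of_hasDerivAt_of_tendsto'
    (fun z _ => hasDerivAt_neg_sq_mul_normalPdf hσ z) (integrable_sub_mul_normalPdf hσ).integrableOn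
    hlim

lemma setIntegral_Ioi_sub_mul_normalPdf (hσ : 0 < σ) (x : ℝ) :
    ∫ z in Ioi x, (z - μ) * normalPdf μ σ z = σ ^ 2 * normalPdf μ σ x := by
  have hlim : Tendsto (fun t => -(σ ^ 2 * normalPdf μ σ t)) atTop (𝓝 0) := by
    simpa using (((tendsto_normalPdf_cocompact hσ).mono_left atTop_le_cocompact).const_mul
      (σ ^ 2)).neg
  simpa using integral_Ioi_of_hasDerivAt_of_tendsto'
    (fun z _ => hasDerivAt_neg_sq_mul_normalPdf hσ z) (integrable_sub_mul_normalPdf hσ).integrableOn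
    hlim

lemma integrable_affine_mul_normalPdf (hσ : 0 < σ) (a m : ℝ) :
    Integrable (fun z => (a + m * (z - μ)) * normalPdf μ σ z) := by
  simp_rw [add_mul, mul_assoc]
  exact (integrable_normalPdf.const_mul a).add ((integrable_sub_mul_normalPdf hσ).const_mul m)

lemma setIntegral_affine_mul_normalPdf (hσ : 0 < σ) (s : Set ℝ) (a m : ℝ) :
    ∫ z in s, (a + m * (z - μ)) * normalPdf μ σ z
      = a * (∫ z in s, normalPdf μ σ z) + m * ∫ z in s, (z - μ) * normalPdf μ σ z := by
  simp_rw [add_mul, mul_assoc]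
  rw [integral_add (integrable_normalPdf.const_mul a).integrableOn
    ((integrable_sub_mul_normalPdf hσ).const_mul m).integrableOn, integral_const_mul,
    integral_const_mul]

lemma integral_affine_mul_normalPdf (hσ : 0 < σ) (a m : ℝ) :
    ∫ z, (a + m * (z - μ)) * normalPdf μ σ z = a := by
  have hcentered : ∫ z, (z - μ) * normalPdf μ σ z = 0 := by
    rw [← integral_add_compl measurableSet_Iic (integrable_sub_mul_normalPdf hσ), compl_Iic,
      setIntegral_Iic_sub_mul_normalPdf hσ 0, setIntegral_Ioi_sub_mul_normalPdf hσ 0,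
      neg_add_cancel]
  simpa [integral_normalPdf hσ, hcentered] using
    setIntegral_affine_mul_normalPdf (μ := μ) hσ univ a m

lemma neg_sq_mul_normalPdf_le_sub_mul_setIntegral_Iic (hσ : 0 < σ) (x : ℝ) :
    -(σ ^ 2 * normalPdf μ σ x) ≤ (x - μ) * ∫ z in Iic x, normalPdf μ σ z := by
  have hnonneg : 0 ≤ ∫ z in Iic x, ((x - μ) + (-1) * (z - μ)) * normalPdf μ σ z :=
    setIntegral_nonneg measurableSet_Iic fun z (hz : z ≤ x) =>
      mul_nonneg (by linarith) (normalPdf_nonneg z)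
  rw [setIntegral_affine_mul_normalPdf hσ, setIntegral_Iic_sub_mul_normalPdf hσ] at hnonneg
  linarith

lemma sub_mul_setIntegral_Ioi_normalPdf_le (hσ : 0 < σ) (x : ℝ) :
    (x - μ) * ∫ z in Ioi x, normalPdf μ σ z ≤ σ ^ 2 * normalPdf μ σ x := by
  have hnonneg : 0 ≤ ∫ z in Ioi x, ((μ - x) + 1 * (z - μ)) * normalPdf μ σ z :=
    setIntegral_nonneg measurableSet_Ioi fun z (hz : x < z) =>
      mul_nonneg (by linarith) (normalPdf_nonneg z)
  rw [setIntegral_affine_mul_normalPdf hσ, setIntegral_Ioi_sub_mul_normalPdf hσ] at hnonneg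
  linarith

lemma integrable_mul_normalPdf_of_lipschitzWith (hσ : 0 < σ) {K : NNReal} {h : ℝ → ℝ}
    (hlip : LipschitzWith K h) : Integrable (fun z => h z * normalPdf μ σ z) := by
  refine (((integrable_normalPdf (μ := μ) (σ := σ)).const_mul |h μ|).add
    ((integrable_sub_mul_normalPdf (μ := μ) hσ).norm.const_mul K)).mono'
    (hlip.continuous.mul continuous_normalPdf).aestronglyMeasurable (.of_forall fun z => ?_)
  have hgrowth : |h z| ≤ |h μ| + K * |z - μ| := by
    have := hlip.dist_le_mul z μ
    rw [Real.dist_eq, Real.dist_eq] at this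
    linarith [abs_sub_abs_le_abs_sub (h z) (h μ)]
  have hφ := normalPdf_nonneg (μ := μ) (σ := σ) z
  simp only [Pi.add_apply, Real.norm_eq_abs, abs_mul, abs_of_nonneg hφ]
  nlinarith

lemma integrable_sub_const_mul_normalPdf {h : ℝ → ℝ}
    (hint : Integrable (fun z => h z * normalPdf μ σ z)) (c : ℝ) :
    Integrable (fun z => (h z - c) * normalPdf μ σ z) := by
  simp_rw [sub_mul]
  exact hint.sub (integrable_normalPdf.const_mul c)

lemma gaussExp_comp_affine (hσ : 0 < σ) {h : ℝ → ℝ} (hh : Measurable h) :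
    gaussExp (fun w => h (μ + σ * w)) = ∫ z, h z * normalPdf μ σ z := by
  have hlaw : HasLaw (fun w => σ * w + μ) (gaussianReal μ (.mk (σ ^ 2) (sq_nonneg σ)))
      (gaussianReal 0 1) := by
    simpa using
      gaussianReal_add_const (gaussianReal_const_mul (HasLaw.id (μ := gaussianReal 0 1)) σ) μ
  have hvar : ((.mk (σ ^ 2) (sq_nonneg σ)) : NNReal) ≠ 0 :=
    fun h => (pow_pos hσ 2).ne' congr(NNReal.toReal $h)
  calc gaussExp (fun w => h (μ + σ * w))
      = ∫ z, h z ∂gaussianReal μ (.mk (σ ^ 2) (sq_nonneg σ)) := by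
        rw [← hlaw.integral_comp hh.aestronglyMeasurable]
        simp only [gaussExp, Function.comp_def, add_comm]
    _ = ∫ z, h z * normalPdf μ σ z := by
        simp only [integral_gaussianReal_eq_integral_smul hvar, normalPdf_eq_gaussianPDFReal,
          smul_eq_mul, mul_comm]

end NormalDensity

section SteinSolution

variable {μ σ : ℝ}

lemma sub_mul_setIntegral_Iic_le_of_affine_le (hσ : 0 < σ) {g : ℝ → ℝ}
    (hg : Integrable (fun z => g z * normalPdf μ σ z)) (hg0 : ∫ z, g z * normalPdf μ σ z = 0)
    {x a m : ℝ} (hle : ∀ z, a + m * (z - μ) ≤ g z) (hx : g x = a + m * (x - μ)) :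
    (x - μ) * ∫ z in Iic x, g z * normalPdf μ σ z ≤ -(σ ^ 2 * normalPdf μ σ x * g x) := by
  have hmono (s : Set ℝ) (hs : MeasurableSet s) :
      ∫ z in s, (a + m * (z - μ)) * normalPdf μ σ z ≤ ∫ z in s, g z * normalPdf μ σ z :=
    setIntegral_mono_on (integrable_affine_mul_normalPdf hσ a m).integrableOn hg.integrableOn hs
      fun z _ => mul_le_mul_of_nonneg_right (hle z) (normalPdf_nonneg z)
  have ha : a ≤ 0 := by
    simpa [integral_affine_mul_normalPdf hσ, hg0] using hmono univ MeasurableSet.univ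
  rw [hx]
  rcases le_total x μ with hxμ | hμx
  · have hleft := hmono (Iic x) measurableSet_Iic
    rw [setIntegral_affine_mul_normalPdf hσ, setIntegral_Iic_sub_mul_normalPdf hσ] at hleft
    have hmills := neg_sq_mul_normalPdf_le_sub_mul_setIntegral_Iic (μ := μ) hσ x
    nlinarith [mul_le_mul_of_nonpos_left hleft (sub_nonpos.2 hxμ)]
  · have hright := hmono (Ioi x) measurableSet_Ioi
    rw [setIntegral_affine_mul_normalPdf hσ, setIntegral_Ioi_sub_mul_normalPdf hσ] at hright
    have hmills := sub_mul_setIntegral_Ioi_normalPdf_le (μ := μ) hσ x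
    have htails : ∫ z in Iic x, g z * normalPdf μ σ z = -∫ z in Ioi x, g z * normalPdf μ σ z := by
      rw [eq_neg_iff_add_eq_zero, ← hg0, ← integral_add_compl measurableSet_Iic hg, compl_Iic]
    rw [htails]
    nlinarith [mul_le_mul_of_nonneg_left hright (sub_nonneg.2 hμx)]

lemma integral_sub_gaussExp_mul_normalPdf (hσ : 0 < σ) {h : ℝ → ℝ} (hh : Measurable h)
    (hint : Integrable (fun z => h z * normalPdf μ σ z)) :
    ∫ z, (h z - gaussExp (fun w => h (μ + σ * w))) * normalPdf μ σ z = 0 := by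
  simp_rw [sub_mul]
  rw [integral_sub hint (integrable_normalPdf.const_mul _), integral_const_mul,
    integral_normalPdf hσ, mul_one, gaussExp_comp_affine hσ hh, sub_self]

lemma hasDerivAt_steinSol (hσ : 0 < σ) {h : ℝ → ℝ} (hh : Continuous h)
    (hint : Integrable (fun z => h z * normalPdf μ σ z)) (x : ℝ) :
    HasDerivAt (steinSol μ σ h)
      (((x - μ) * steinSol μ σ h x + (h x - gaussExp (fun w => h (μ + σ * w)))) / σ ^ 2) x := by
  have hF := hasDerivAt_setIntegral_Iic
    (k := fun z => (h z - gaussExp (fun w => h (μ + σ * w))) * normalPdf μ σ z)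
    ((hh.sub continuous_const).mul continuous_normalPdf)
    (integrable_sub_const_mul_normalPdf hint _) x
  have hpdf := normalPdf_pos (μ := μ) hσ x
  have hinv := ((hasDerivAt_normalPdf (μ := μ) (σ := σ) x).const_mul (σ ^ 2)).inv
    (by positivity)
  refine (hinv.mul hF).congr_deriv ?_
  simp only [steinSol, Pi.inv_apply]
  field_simp

lemma sub_mul_steinSol_add_nonpos {h : ℝ → ℝ} (hconv : ConvexOn ℝ univ h) {K : NNReal}
    (hlip : LipschitzWith K h) (hσ : 0 < σ) (x : ℝ) :
    (x - μ) * steinSol μ σ h x + (h x - gaussExp (fun w => h (μ + σ * w))) ≤ 0 := by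
  have hint := integrable_mul_normalPdf_of_lipschitzWith (μ := μ) hσ hlip
  obtain ⟨m, hm⟩ := hconv.exists_supporting_line (by simp : x ∈ interior univ)
  have hnum := sub_mul_setIntegral_Iic_le_of_affine_le hσ
    (integrable_sub_const_mul_normalPdf hint _)
    (integral_sub_gaussExp_mul_normalPdf hσ hlip.continuous.measurable hint)
    (a := h x - gaussExp (fun w => h (μ + σ * w)) + m * (μ - x)) (m := m)
    (fun z => by linarith [hm z (mem_univ z)]) (by ring)
  have hpdf := normalPdf_pos (μ := μ) hσ x
  beta_reduce at hnum
  rw [steinSol]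
  set c := gaussExp (fun w => h (μ + σ * w))
  calc (x - μ) * ((σ ^ 2 * normalPdf μ σ x)⁻¹ * ∫ z in Iic x, (h z - c) * normalPdf μ σ z)
        + (h x - c)
      = (σ ^ 2 * normalPdf μ σ x)⁻¹ * ((x - μ) * (∫ z in Iic x, (h z - c) * normalPdf μ σ z)
          + σ ^ 2 * normalPdf μ σ x * (h x - c)) := by
        field_simp
    _ ≤ 0 := mul_nonpos_of_nonneg_of_nonpos (by positivity) (by linarith)

end SteinSolution

/-- **Monotonicity of the Stein solution** (Lemma B.4): for every convex `1`-Lipschitz `h`,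
every `μ ∈ ℝ` and `σ > 0`, the Stein solution `f_{μ,σ,h}` is nonincreasing. -/
theorem steinSol_antitone
    (h : ℝ → ℝ) (hconv : ConvexOn ℝ Set.univ h) (hlip : LipschitzWith 1 h)
    (μ σ : ℝ) (hσ : 0 < σ) :
    ∀ x y : ℝ, x ≤ y → steinSol μ σ h y ≤ steinSol μ σ h x := by
  have hint := integrable_mul_normalPdf_of_lipschitzWith (μ := μ) hσ hlip
  intro x y hxy
  refine antitone_of_hasDerivAt_nonpos (hasDerivAt_steinSol hσ hlip.continuous hint)
    (fun t => ?_) hxy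
  exact div_nonpos_of_nonpos_of_nonneg (sub_mul_steinSol_add_nonpos hconv hlip hσ t)
    (sq_nonneg σ)
end

section
/- For all α > 0, E_Z[(1/α)·ln(cosh(αZ))] < α/2, where Z ∼ N(0,1); moreover lim_{α→∞} E_Z[(1/α)·ln(cosh(αZ))] = √(2/π). -/
open MeasureTheory ProbabilityTheory Real Filter

/-!
Comparing the power series of `cosh x` and `exp (x ^ 2 / 2)` term by term gives
`log (cosh x) < x ^ 2 / 2` for `x ≠ 0`; since the Gaussian has no atom at `0`, integrating
`α⁻¹ log (cosh (α z)) < α z ^ 2 / 2` gives a value `< α E[Z ^ 2] / 2 = α / 2`.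
From `e^{|x|} / 2 ≤ cosh x ≤ e^{|x|}` we get `|z| - log 2 / α ≤ α⁻¹ log (cosh (α z)) ≤ |z|`,
which squeezes the expectation to `E|Z| = √(2 / π)`.
-/

open Set

namespace Real

lemma cosh_lt_exp_half_sq {x : ℝ} (hx : x ≠ 0) : cosh x < exp (x ^ 2 / 2) := by
  rw [cosh_eq_tsum, exp_eq_exp_ℝ, NormedSpace.exp_eq_tsum ℝ]
  refine x.hasSum_cosh.summable.tsum_lt_tsum (i := 2) (fun i ↦ ?_) ?_
    (NormedSpace.expSeries_summable' (x ^ 2 / 2))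
  · simp only [div_pow, pow_mul, smul_eq_mul, inv_mul_eq_div, div_div]
    gcongr
    norm_cast
    exact Nat.two_pow_mul_factorial_le_factorial_two_mul _
  · -- the `x ^ 4` terms: `1 / 4! < 1 / (2 ^ 2 * 2!)`
    simp only [div_pow, pow_mul, smul_eq_mul, inv_mul_eq_div, div_div]
    gcongr
    norm_num [Nat.factorial]

lemma log_cosh_lt_half_sq {x : ℝ} (hx : x ≠ 0) : log (cosh x) < x ^ 2 / 2 :=
  (log_lt_iff_lt_exp (cosh_pos x)).2 (cosh_lt_exp_half_sq hx)

lemma log_cosh_nonneg (x : ℝ) : 0 ≤ log (cosh x) :=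
  log_nonneg (one_le_cosh x)

lemma log_cosh_le_abs (x : ℝ) : log (cosh x) ≤ |x| := by
  rw [← cosh_abs, log_le_iff_le_exp (cosh_pos _), cosh_eq]
  linarith [exp_le_exp.2 (neg_le_self (abs_nonneg x))]

lemma abs_sub_log_two_le_log_cosh (x : ℝ) : |x| - log 2 ≤ log (cosh x) := by
  rw [← cosh_abs, sub_le_iff_le_add, ← log_mul (cosh_pos _).ne' two_ne_zero,
    le_log_iff_exp_le (by positivity), cosh_eq]
  linarith [exp_pos (-|x|)]

section Scaled

variable {α : ℝ}

lemma one_div_mul_log_cosh_mul_lt (hα : 0 < α) {z : ℝ} (hz : z ≠ 0) :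
    1 / α * log (cosh (α * z)) < α / 2 * z ^ 2 := by
  have h := log_cosh_lt_half_sq (mul_ne_zero hα.ne' hz)
  rw [one_div_mul_eq_div, div_lt_iff₀ hα]
  linarith

lemma one_div_mul_log_cosh_mul_le_abs (hα : 0 < α) (z : ℝ) :
    1 / α * log (cosh (α * z)) ≤ |z| := by
  have h := log_cosh_le_abs (α * z)
  rw [abs_mul, abs_of_pos hα] at h
  rw [one_div_mul_eq_div, div_le_iff₀ hα]
  linarith

lemma abs_sub_log_two_div_le_one_div_mul_log_cosh_mul (hα : 0 < α) (z : ℝ) :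
    |z| - log 2 / α ≤ 1 / α * log (cosh (α * z)) := by
  have h := abs_sub_log_two_le_log_cosh (α * z)
  rw [abs_mul, abs_of_pos hα] at h
  rw [one_div_mul_eq_div, le_div_iff₀ hα, sub_mul, div_mul_cancel₀ _ hα.ne']
  linarith

end Scaled

end Real

lemma integral_Ioi_mul_exp_neg_mul_sq {b : ℝ} (hb : 0 < b) :
    ∫ x in Ioi (0 : ℝ), x * exp (-b * x ^ 2) = (2 * b)⁻¹ := by
  have h := integral_rpow_mul_exp_neg_mul_rpow two_pos (q := 1) (by norm_num) hb
  norm_num [Real.rpow_neg_one] at h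
  simp only [neg_mul, h]
  ring

lemma integral_lt_integral_of_ae_lt {X : Type*} [MeasurableSpace X] {μ : Measure X} [NeZero μ]
    {f g : X → ℝ} (hf : Integrable f μ) (hg : Integrable g μ) (h : ∀ᵐ x ∂μ, f x < g x) :
    ∫ x, f x ∂μ < ∫ x, g x ∂μ := by
  rw [← sub_pos, ← integral_sub hg hf, integral_pos_iff_support_of_nonneg_ae
    (h.mono fun x hx ↦ (sub_pos.2 hx).le) (hg.sub hf), pos_iff_ne_zero, Ne,
    measure_eq_zero_iff_ae_notMem]
  intro h0
  obtain ⟨x, hlt, hx⟩ := (h.and h0).exists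
  exact hx (sub_pos.2 hlt).ne'

namespace ProbabilityTheory

open scoped NNReal

lemma integral_sq_gaussianReal (μ : ℝ) (v : ℝ≥0) :
    ∫ x, x ^ 2 ∂gaussianReal μ v = μ ^ 2 + v := by
  have h := variance_eq_sub (memLp_id_gaussianReal' (μ := μ) (v := v) 2 (by simp))
  simp only [variance_id_gaussianReal, Pi.pow_apply, id_eq, integral_id_gaussianReal] at h
  linarith

lemma integral_abs_gaussianReal (v : ℝ≥0) : ∫ x, |x| ∂gaussianReal 0 v = √(2 * v / π) := by
  rcases eq_or_ne v 0 with rfl | hv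
  · simp
  have hv' : (0 : ℝ) < v := by positivity
  have hpdf : ∀ x : ℝ, gaussianPDFReal 0 v x • |x|
      = (√(2 * π * v))⁻¹ * (|x| * exp (-(2 * (v : ℝ))⁻¹ * |x| ^ 2)) := by
    intro x
    rw [gaussianPDFReal_def, sq_abs, smul_eq_mul]
    ring_nf
  simp_rw [integral_gaussianReal_eq_integral_smul hv, hpdf]
  rw [integral_const_mul, integral_comp_abs (f := fun t ↦ t * exp (-(2 * (v : ℝ))⁻¹ * t ^ 2)),
    integral_Ioi_mul_exp_neg_mul_sq (by positivity), eq_comm,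
    sqrt_eq_iff_mul_self_eq_of_pos (by positivity)]
  field_simp
  rw [sq_sqrt (by positivity)]

lemma ae_ne_gaussianReal (μ : ℝ) {v : ℝ≥0} (hv : v ≠ 0) (a : ℝ) :
    ∀ᵐ x ∂gaussianReal μ v, x ≠ a :=
  (gaussianReal_absolutelyContinuous μ hv).ae_le (volume.ae_ne a)

end ProbabilityTheory

section LogCosh

variable {μ : Measure ℝ}

lemma integrable_one_div_mul_log_cosh_mul (hμ : Integrable (fun z ↦ z) μ) (α : ℝ) :
    Integrable (fun z ↦ 1 / α * log (cosh (α * z))) μ := by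
  refine Integrable.const_mul ?_ _
  refine (hμ.norm.const_mul |α|).mono'
    (continuous_cosh.comp (continuous_const_mul α)).measurable.log.aestronglyMeasurable
    (ae_of_all _ fun z ↦ ?_)
  rw [norm_of_nonneg (log_cosh_nonneg _), norm_eq_abs, ← abs_mul]
  exact log_cosh_le_abs _

lemma integral_one_div_mul_log_cosh_mul_lt [NeZero μ] (h₁ : Integrable (fun z ↦ z) μ)
    (h₂ : Integrable (fun z ↦ z ^ 2) μ) (h₀ : ∀ᵐ z ∂μ, z ≠ 0) {α : ℝ} (hα : 0 < α) :
    ∫ z, 1 / α * log (cosh (α * z)) ∂μ < α / 2 * ∫ z, z ^ 2 ∂μ := by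
  rw [← integral_const_mul]
  exact integral_lt_integral_of_ae_lt (integrable_one_div_mul_log_cosh_mul h₁ α)
    (h₂.const_mul _) (h₀.mono fun z hz ↦ one_div_mul_log_cosh_mul_lt hα hz)

lemma tendsto_integral_one_div_mul_log_cosh_mul [IsFiniteMeasure μ]
    (hμ : Integrable (fun z ↦ z) μ) :
    Tendsto (fun α ↦ ∫ z, 1 / α * log (cosh (α * z)) ∂μ) atTop (nhds (∫ z, |z| ∂μ)) := by
  have hlower : Tendsto (fun α ↦ ∫ z, (|z| - log 2 / α) ∂μ) atTop (nhds (∫ z, |z| ∂μ)) := by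
    simp_rw [integral_sub hμ.abs (integrable_const _), integral_const, smul_eq_mul]
    simpa using tendsto_const_nhds.sub
      ((tendsto_const_nhds.div_atTop tendsto_id).const_mul (μ.real univ))
  have hf := integrable_one_div_mul_log_cosh_mul hμ
  refine tendsto_of_tendsto_of_tendsto_of_le_of_le' hlower tendsto_const_nhds ?_ ?_
  · filter_upwards [eventually_gt_atTop 0] with α hα
    exact integral_mono (hμ.abs.sub (integrable_const _)) (hf α)
      (abs_sub_log_two_div_le_one_div_mul_log_cosh_mul hα)
  · filter_upwards [eventually_gt_atTop 0] with α hα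
    exact integral_mono (hf α) hμ.abs (one_div_mul_log_cosh_mul_le_abs hα)

end LogCosh

/-- **Lemma E.1**: for all `α > 0`, `E_Z[α⁻¹ ln cosh(α Z)] < α/2`, and
`E_Z[α⁻¹ ln cosh(α Z)] → √(2/π)` as `α → ∞`. -/
theorem gaussExp_log_cosh_lt_and_tendsto :
    (∀ α : ℝ, 0 < α →
        gaussExp (fun z => 1 / α * Real.log (Real.cosh (α * z))) < α / 2) ∧
      Tendsto (fun α : ℝ => gaussExp (fun z => 1 / α * Real.log (Real.cosh (α * z))))
        atTop (nhds (Real.sqrt (2 / Real.pi))) := by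
  have h₁ : Integrable (fun z ↦ z) (gaussianReal 0 1) := (memLp_id_gaussianReal 1).integrable le_rfl
  have h₂ : Integrable (fun z ↦ z ^ 2) (gaussianReal 0 1) := (memLp_id_gaussianReal 2).integrable_sq
  refine ⟨fun α hα ↦ ?_, ?_⟩
  · simpa [gaussExp, integral_sq_gaussianReal] using
      integral_one_div_mul_log_cosh_mul_lt h₁ h₂ (ae_ne_gaussianReal 0 one_ne_zero 0) hα
  · simpa [gaussExp, integral_abs_gaussianReal] using tendsto_integral_one_div_mul_log_cosh_mul h₁
end
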